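/- Let w, s, t be nonnegative forms on a complex vector space X such that s and t are w-quasi-units (s[x] = sup_{n∈ℕ} inf_{y∈X} (w[x−y] + n·s[y]) and t[x] = sup_{n∈ℕ} inf_{y∈X} (w[x−y] + n·t[y]) for all x). Let m be a nonnegative form with m[x] = 2·inf_{y∈X} (s[x−y] + t[y]) for all x ∈ X (i.e. m = 2(s : t)). Then: (1) m is the greatest lower bound of s and t in the set of all nonnegative forms on X; (2) m is itself a w-quasi-unit; and (3) m[x] = sup_{n∈ℕ} inf_{y∈X} (t[x−y] + n·s[y]) = sup_{n∈ℕ} inf_{y∈X} (s[x−y] + n·t[y]) for all x ∈ X (i.e. m = D_s t = D_t s). -/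

import Mathlib

open scoped ComplexOrder

/-- A sesquilinear form (linear in the first, conjugate-linear in the second variable)
`t : X →ₗ[ℂ] X →ₗ⋆[ℂ] ℂ` is nonnegative if `t(x,x) ≥ 0` for all `x`. -/
def IsNNForm {X : Type*} [AddCommGroup X] [Module ℂ X]
    (t : X →ₗ[ℂ] X →ₗ⋆[ℂ] ℂ) : Prop :=
  ∀ x : X, 0 ≤ t x x

/-- The quadratic form of a form: `t[x] = t(x,x)`, viewed as a real number. -/
def FQ {X : Type*} [AddCommGroup X] [Module ℂ X]
    (t : X →ₗ[ℂ] X →ₗ⋆[ℂ] ℂ) (x : X) : ℝ :=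
  (t x x).re

/-- The order on forms: `t ≤ w` iff `t[x] ≤ w[x]` for all `x`. -/
def FLe {X : Type*} [AddCommGroup X] [Module ℂ X]
    (t w : X →ₗ[ℂ] X →ₗ⋆[ℂ] ℂ) : Prop :=
  ∀ x : X, FQ t x ≤ FQ w x

/-- `t` and `w` are singular: the only nonnegative form below both is the zero form. -/
def SingForm {X : Type*} [AddCommGroup X] [Module ℂ X]
    (t w : X →ₗ[ℂ] X →ₗ⋆[ℂ] ℂ) : Prop :=
  ∀ s : X →ₗ[ℂ] X →ₗ⋆[ℂ] ℂ, IsNNForm s → FLe s t → FLe s w → s = 0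


/-!
Everything runs on functions `f ≥ 0` on `X` with `√f` subadditive: quadratic forms of nonnegative
forms are such (Cauchy–Schwarz), and so are parallel sums of such functions (Minkowski in `ℝ²`).
If `f ≤ a` and `f ≤ b`, then `√f x ≤ √a (x - y) + √b y` gives `f ≤ 2 (a : b)` and, via
`(p + q)² ≤ (1 + 1/n) (p² + n q²)`, also `f ≤ (1 + 1/n) (a : n b)`, hence `f ≤ D_b a`.

The quasi-unit property of `t` gives `(w : n t) ≤ t`. Testing `(s : t)[x]` at the midpoint
`(x + ξ)/2` and comparing with `w[x - ξ] + n t[ξ]` yields `2 (s : t) ≤ t`; by symmetry `m ≤ s`.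
So `m` is the greatest minorant of `s` and `t` with subadditive square root. Each of
`(w : n m)`, `(t : n s)`, `(s : n t)` is such a minorant, hence `≤ m`, while `m` lies below both
arguments of the corresponding `D`; so all three `D`'s equal `m`.
-/

open Filter Topology

section InfConv

variable {X : Type*} [AddCommGroup X]

/-- `infConv a b` is the parallel sum `a : b`, and `dSup a b` below is `D_b a`. -/
noncomputable def infConv (a b : X → ℝ) (x : X) : ℝ := ⨅ y, (a (x - y) + b y)

noncomputable def dSup (a b : X → ℝ) (x : X) : ℝ := ⨆ n : ℕ, infConv a ((n : ℝ) • b) x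

variable {a a' b b' : X → ℝ}

lemma infConv_le (ha : 0 ≤ a) (hb : 0 ≤ b) (x y : X) :
    infConv a b x ≤ a (x - y) + b y :=
  ciInf_le ⟨0, by rintro _ ⟨z, rfl⟩; exact add_nonneg (ha _) (hb z)⟩ y

lemma infConv_nonneg (ha : 0 ≤ a) (hb : 0 ≤ b) : 0 ≤ infConv a b :=
  fun _ => le_ciInf fun y => add_nonneg (ha _) (hb y)

lemma le_sqrt_infConv {d : ℝ} {x : X} (h : ∀ y, d ≤ √(a (x - y) + b y)) :
    d ≤ √(infConv a b x) := by
  rcases le_or_gt d 0 with hd | hd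
  · exact hd.trans (Real.sqrt_nonneg _)
  · exact (Real.le_sqrt' hd).2 (le_ciInf fun y => (Real.le_sqrt' hd).1 (h y))

lemma infConv_comm (a b : X → ℝ) : infConv a b = infConv b a := by
  ext x
  rw [infConv, ← (Equiv.subLeft x).iInf_comp]
  simp only [Equiv.subLeft_apply, sub_sub_cancel, add_comm, infConv]

lemma infConv_mono (ha : 0 ≤ a) (hb : 0 ≤ b) (haa' : a ≤ a') (hbb' : b ≤ b') :
    infConv a b ≤ infConv a' b' :=
  fun x => le_ciInf fun y => (infConv_le ha hb x y).trans (add_le_add (haa' _) (hbb' y))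

lemma infConv_smul_mono (ha : 0 ≤ a) (hb : 0 ≤ b) (haa' : a ≤ a') (hbb' : b ≤ b') (n : ℕ) :
    infConv a ((n : ℝ) • b) ≤ infConv a' ((n : ℝ) • b') :=
  infConv_mono ha (smul_nonneg n.cast_nonneg hb) haa'
    (smul_le_smul_of_nonneg_left hbb' n.cast_nonneg)

lemma infConv_le_left (ha : 0 ≤ a) (hb : 0 ≤ b) (hb0 : b 0 = 0) : infConv a b ≤ a :=
  fun x => by simpa [hb0] using infConv_le ha hb x 0

lemma infConv_smul_le_left (ha : 0 ≤ a) (hb : 0 ≤ b) (hb0 : b 0 = 0) (n : ℕ) :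
    infConv a ((n : ℝ) • b) ≤ a :=
  infConv_le_left ha (smul_nonneg n.cast_nonneg hb) (by simp [hb0])

lemma infConv_smul_le_dSup (ha : 0 ≤ a) (hb : 0 ≤ b) (hb0 : b 0 = 0) (n : ℕ) :
    infConv a ((n : ℝ) • b) ≤ dSup a b := fun x =>
  le_ciSup ⟨a x, by rintro _ ⟨k, rfl⟩; exact infConv_smul_le_left ha hb hb0 k x⟩ n

lemma dSup_le_left (ha : 0 ≤ a) (hb : 0 ≤ b) (hb0 : b 0 = 0) : dSup a b ≤ a :=
  fun x => ciSup_le fun n => infConv_smul_le_left ha hb hb0 n x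

end InfConv

lemma add_sq_le_one_add_inv_mul_add {p q c : ℝ} (hc : 0 < c) :
    (p + q) ^ 2 ≤ (1 + c⁻¹) * p ^ 2 + (1 + c) * q ^ 2 := by
  have h : (1 + c⁻¹) * p ^ 2 + (1 + c) * q ^ 2 - (p + q) ^ 2 = (p - c * q) ^ 2 / c := by
    field_simp
    ring
  nlinarith [h, div_nonneg (sq_nonneg (p - c * q)) hc.le]

lemma sqrt_sq_add_sq_triangle (p q p' q' : ℝ) :
    √((p + p') ^ 2 + (q + q') ^ 2) ≤ √(p ^ 2 + q ^ 2) + √(p' ^ 2 + q' ^ 2) := by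
  simpa [EuclideanSpace.norm_eq, Fin.sum_univ_two] using norm_add_le !₂[p, q] !₂[p', q']

lemma le_of_forall_le_one_add_inv_mul {u v : ℝ} (h : ∀ n : ℕ, 0 < n → u ≤ (1 + (n : ℝ)⁻¹) * v) :
    u ≤ v := by
  have hlim : Tendsto (fun n : ℕ => (1 + (n : ℝ)⁻¹) * v) atTop (𝓝 v) := by
    simpa using
      ((tendsto_const_nhds (x := (1 : ℝ))).add tendsto_inv_atTop_nhds_zero_nat).mul_const v
  exact ge_of_tendsto hlim ((eventually_gt_atTop 0).mono h)

section SqrtSubadditive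

variable {X : Type*} [AddCommGroup X]

structure SqrtSubadditive (f : X → ℝ) : Prop where
  nonneg : 0 ≤ f
  sqrt_add_le : ∀ x y, √(f (x + y)) ≤ √(f x) + √(f y)

variable {f a b : X → ℝ}

namespace SqrtSubadditive

lemma le_sq_sqrt_add_sqrt (hf : SqrtSubadditive f) (x y : X) :
    f (x + y) ≤ (√(f x) + √(f y)) ^ 2 :=
  (Real.sqrt_le_left (by positivity)).1 (hf.sqrt_add_le x y)

lemma le_add_mul (hf : SqrtSubadditive f) {c : ℝ} (hc : 0 < c) (x y : X) :
    f (x + y) ≤ (1 + c⁻¹) * f x + (1 + c) * f y := by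
  calc f (x + y) ≤ (√(f x) + √(f y)) ^ 2 := hf.le_sq_sqrt_add_sqrt x y
    _ ≤ (1 + c⁻¹) * √(f x) ^ 2 + (1 + c) * √(f y) ^ 2 := add_sq_le_one_add_inv_mul_add hc
    _ = (1 + c⁻¹) * f x + (1 + c) * f y := by
      rw [Real.sq_sqrt (hf.nonneg x), Real.sq_sqrt (hf.nonneg y)]

lemma smul (hf : SqrtSubadditive f) {c : ℝ} (hc : 0 ≤ c) : SqrtSubadditive (c • f) where
  nonneg := smul_nonneg hc hf.nonneg
  sqrt_add_le x y := by
    simp only [Pi.smul_apply, smul_eq_mul, Real.sqrt_mul hc, ← mul_add]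
    exact mul_le_mul_of_nonneg_left (hf.sqrt_add_le x y) (Real.sqrt_nonneg c)

lemma le_two_mul_infConv (hf : SqrtSubadditive f) (hfa : f ≤ a) (hfb : f ≤ b) (x : X) :
    f x ≤ 2 * infConv a b x := by
  have h : ∀ y, f x / 2 ≤ a (x - y) + b y := fun y => by
    have := hf.le_add_mul one_pos (x - y) y
    rw [sub_add_cancel] at this
    linarith [hfa (x - y), hfb y]
  have : f x / 2 ≤ infConv a b x := le_ciInf h
  linarith

lemma le_one_add_inv_mul_infConv (hf : SqrtSubadditive f) (hfa : f ≤ a) (hfb : f ≤ b)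
    {n : ℕ} (hn : 0 < n) (x : X) :
    f x ≤ (1 + (n : ℝ)⁻¹) * infConv a ((n : ℝ) • b) x := by
  have hn' : (0 : ℝ) < n := Nat.cast_pos.2 hn
  rw [← div_le_iff₀' (by positivity)]
  refine le_ciInf fun y => ?_
  rw [div_le_iff₀' (by positivity)]
  have h := hf.le_add_mul hn' (x - y) y
  rw [sub_add_cancel] at h
  calc f x ≤ (1 + (n : ℝ)⁻¹) * (f (x - y) + n * f y) := by
        convert h using 1
        field_simp
        ring
    _ ≤ (1 + (n : ℝ)⁻¹) * (a (x - y) + n * b y) := by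
        gcongr
        exacts [hfa _, hfb _]

lemma eq_dSup (hf : SqrtSubadditive f) (hfa : f ≤ a) (hfb : f ≤ b)
    (hle : ∀ n : ℕ, infConv a ((n : ℝ) • b) ≤ f) : f = dSup a b := by
  ext x
  refine le_antisymm (le_of_forall_le_one_add_inv_mul fun n hn => ?_) (ciSup_le fun n => hle n x)
  have hbdd : BddAbove (Set.range fun n : ℕ => infConv a ((n : ℝ) • b) x) :=
    ⟨f x, by rintro _ ⟨n, rfl⟩; exact hle n x⟩
  exact (hf.le_one_add_inv_mul_infConv hfa hfb hn x).trans
    (mul_le_mul_of_nonneg_left (le_ciSup hbdd n) (by positivity))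

end SqrtSubadditive

lemma sqrtSubadditive_infConv (ha : SqrtSubadditive a) (hb : SqrtSubadditive b) :
    SqrtSubadditive (infConv a b) := by
  refine ⟨infConv_nonneg ha.nonneg hb.nonneg, fun x x' => ?_⟩
  have key : ∀ y y', √(infConv a b (x + x')) ≤ √(a (x - y) + b y) + √(a (x' - y') + b y') := by
    intro y y'
    have hsplit : infConv a b (x + x') ≤ a ((x - y) + (x' - y')) + b (y + y') := by
      rw [show x - y + (x' - y') = x + x' - (y + y') by abel]
      exact infConv_le ha.nonneg hb.nonneg _ _
    calc √(infConv a b (x + x'))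
        ≤ √((√(a (x - y)) + √(a (x' - y'))) ^ 2 + (√(b y) + √(b y')) ^ 2) :=
          Real.sqrt_le_sqrt (hsplit.trans
            (add_le_add (ha.le_sq_sqrt_add_sqrt _ _) (hb.le_sq_sqrt_add_sqrt _ _)))
      _ ≤ √(√(a (x - y)) ^ 2 + √(b y) ^ 2) + √(√(a (x' - y')) ^ 2 + √(b y') ^ 2) :=
          sqrt_sq_add_sq_triangle _ _ _ _
      _ = √(a (x - y) + b y) + √(a (x' - y') + b y') := by
          simp only [Real.sq_sqrt (ha.nonneg _), Real.sq_sqrt (hb.nonneg _)]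
  rw [← sub_le_iff_le_add]
  refine le_sqrt_infConv fun y => ?_
  rw [sub_le_comm]
  refine le_sqrt_infConv fun y' => ?_
  rw [sub_le_iff_le_add']
  exact key y y'

lemma eq_dSup_of_isGreatest {S T : X → ℝ}
    (hf : IsGreatest {g | SqrtSubadditive g ∧ g ≤ S ∧ g ≤ T} f)
    (ha : SqrtSubadditive a) (hb : SqrtSubadditive b) (hfa : f ≤ a) (hfb : f ≤ b)
    (hS : ∀ n : ℕ, infConv a ((n : ℝ) • b) ≤ S) (hT : ∀ n : ℕ, infConv a ((n : ℝ) • b) ≤ T) :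
    f = dSup a b :=
  hf.1.1.eq_dSup hfa hfb fun n =>
    hf.2 ⟨sqrtSubadditive_infConv ha (hb.smul n.cast_nonneg), hS n, hT n⟩

end SqrtSubadditive

section Forms

variable {X : Type*} [AddCommGroup X] [Module ℂ X] {a s t w : X →ₗ[ℂ] X →ₗ⋆[ℂ] ℂ}

lemma FQ_nonneg (ha : IsNNForm a) : 0 ≤ FQ a := fun x => (Complex.nonneg_iff.1 (ha x)).1

lemma FQ_zero (a : X →ₗ[ℂ] X →ₗ⋆[ℂ] ℂ) : FQ a 0 = 0 := by
  simp [FQ]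

lemma FQ_ofReal_smul (a : X →ₗ[ℂ] X →ₗ⋆[ℂ] ℂ) (r : ℝ) (x : X) :
    FQ a ((r : ℂ) • x) = r ^ 2 * FQ a x := by
  simp only [FQ, map_smulₛₗ, LinearMap.smul_apply, smul_eq_mul, Complex.conj_ofReal,
    RingHom.id_apply]
  simp [Complex.mul_re]
  ring

lemma FQ_add_ofReal_smul (a : X →ₗ[ℂ] X →ₗ⋆[ℂ] ℂ) (r : ℝ) (x y : X) :
    FQ a (x + (r : ℂ) • y) = FQ a y * (r * r) + (a x y + a y x).re * r + FQ a x := by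
  simp only [FQ, map_add, map_smulₛₗ, LinearMap.add_apply, LinearMap.smul_apply, smul_eq_mul,
    Complex.conj_ofReal, RingHom.id_apply]
  simp [Complex.mul_re]
  ring

lemma IsNNForm.sqrtSubadditive (ha : IsNNForm a) : SqrtSubadditive (FQ a) := by
  refine ⟨FQ_nonneg ha, fun x y => ?_⟩
  set B := (a x y + a y x).re
  have hx : 0 ≤ FQ a x := FQ_nonneg ha x
  have hy : 0 ≤ FQ a y := FQ_nonneg ha y
  have hdiscr : B ^ 2 ≤ 4 * FQ a y * FQ a x := by
    have := discrim_le_zero fun r => (FQ_add_ofReal_smul a r x y).symm.trans_ge (FQ_nonneg ha _)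
    rw [discrim] at this
    linarith
  have hB : B ≤ 2 * √(FQ a x) * √(FQ a y) := by
    have h2 : B ^ 2 ≤ (2 * √(FQ a x) * √(FQ a y)) ^ 2 := by
      rw [mul_pow, mul_pow, Real.sq_sqrt hx, Real.sq_sqrt hy]
      linarith
    exact (abs_le_of_sq_le_sq' h2 (by positivity)).2
  have hxy : FQ a (x + y) = FQ a x + B + FQ a y := by
    have h := FQ_add_ofReal_smul a 1 x y
    rw [Complex.ofReal_one, one_smul, mul_one, mul_one] at h
    rw [h]
    ring
  rw [Real.sqrt_le_left (by positivity), hxy]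
  nlinarith [Real.sq_sqrt hx, Real.sq_sqrt hy]

lemma two_mul_infConv_FQ_le (hs : IsNNForm s) (ht : IsNNForm t) (hsw : FQ s ≤ FQ w)
    (htw : ∀ n : ℕ, infConv (FQ w) ((n : ℝ) • FQ t) ≤ FQ t) (x : X) :
    2 * infConv (FQ s) (FQ t) x ≤ FQ t x := by
  set P := infConv (FQ s) (FQ t) x
  have hmid : ∀ ξ, 4 * P ≤ FQ w (x - ξ) + FQ t (x + ξ) := fun ξ => by
    have h := infConv_le (FQ_nonneg hs) (FQ_nonneg ht) x (((2⁻¹ : ℝ) : ℂ) • (x + ξ))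
    rw [show x - ((2⁻¹ : ℝ) : ℂ) • (x + ξ) = ((2⁻¹ : ℝ) : ℂ) • (x - ξ) by module,
      FQ_ofReal_smul, FQ_ofReal_smul] at h
    linarith [hsw (x - ξ)]
  have hn : ∀ n : ℕ, 0 < n → 4 * P - FQ t x ≤ (1 + (n : ℝ)⁻¹) * FQ t x := fun n hn => by
    have h : 4 * P - (1 + (n : ℝ)⁻¹) * FQ t x ≤ infConv (FQ w) (((n + 1 : ℕ) : ℝ) • FQ t) x :=
      le_ciInf fun ξ => by
        have := ht.sqrtSubadditive.le_add_mul (c := n) (Nat.cast_pos.2 hn) x ξ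
        simp only [Pi.smul_apply, smul_eq_mul]
        push_cast
        linarith [hmid ξ]
    linarith [htw (n + 1) x]
  linarith [le_of_forall_le_one_add_inv_mul hn]

end Forms

theorem meet_of_quasi_units
    {X : Type*} [AddCommGroup X] [Module ℂ X]
    (w s t m : X →ₗ[ℂ] X →ₗ⋆[ℂ] ℂ)
    (hw : IsNNForm w) (hs : IsNNForm s) (ht : IsNNForm t) (hm : IsNNForm m)
    (hsq : ∀ x : X, FQ s x = ⨆ n : ℕ, ⨅ y : X, (FQ w (x - y) + (n : ℝ) * FQ s y))
    (htq : ∀ x : X, FQ t x = ⨆ n : ℕ, ⨅ y : X, (FQ w (x - y) + (n : ℝ) * FQ t y))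
    (hmd : ∀ x : X, FQ m x = 2 * ⨅ y : X, (FQ s (x - y) + FQ t y)) :
    (FLe m s ∧ FLe m t ∧
      ∀ r : X →ₗ[ℂ] X →ₗ⋆[ℂ] ℂ, IsNNForm r → FLe r s → FLe r t → FLe r m) ∧
    (∀ x : X, FQ m x = ⨆ n : ℕ, ⨅ y : X, (FQ w (x - y) + (n : ℝ) * FQ m y)) ∧
    (∀ x : X, FQ m x = ⨆ n : ℕ, ⨅ y : X, (FQ t (x - y) + (n : ℝ) * FQ s y)) ∧
    (∀ x : X, FQ m x = ⨆ n : ℕ, ⨅ y : X, (FQ s (x - y) + (n : ℝ) * FQ t y)) := by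
  have hW := FQ_nonneg hw
  have hS := FQ_nonneg hs
  have hT := FQ_nonneg ht
  have hM := FQ_nonneg hm
  have hsw : FQ s ≤ FQ w := fun x => (hsq x).trans_le (dSup_le_left hW hS (FQ_zero s) x)
  have htw : FQ t ≤ FQ w := fun x => (htq x).trans_le (dSup_le_left hW hT (FQ_zero t) x)
  have hsn : ∀ n : ℕ, infConv (FQ w) ((n : ℝ) • FQ s) ≤ FQ s := fun n x =>
    (infConv_smul_le_dSup hW hS (FQ_zero s) n x).trans (hsq x).ge
  have htn : ∀ n : ℕ, infConv (FQ w) ((n : ℝ) • FQ t) ≤ FQ t := fun n x =>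
    (infConv_smul_le_dSup hW hT (FQ_zero t) n x).trans (htq x).ge
  have hmt : FQ m ≤ FQ t := fun x => (hmd x).trans_le (two_mul_infConv_FQ_le hs ht hsw htn x)
  have hms : FQ m ≤ FQ s := fun x => by
    have h := two_mul_infConv_FQ_le ht hs htw hsn x
    rw [infConv_comm] at h
    exact (hmd x).trans_le h
  have hmeet : IsGreatest {g | SqrtSubadditive g ∧ g ≤ FQ s ∧ g ≤ FQ t} (FQ m) :=
    ⟨⟨hm.sqrtSubadditive, hms, hmt⟩,
      fun g ⟨hg, hgs, hgt⟩ x => (hg.le_two_mul_infConv hgs hgt x).trans (hmd x).ge⟩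
  refine ⟨⟨hms, hmt, fun r hr hrs hrt => hmeet.2 ⟨hr.sqrtSubadditive, hrs, hrt⟩⟩,
    congrFun (eq_dSup_of_isGreatest hmeet hw.sqrtSubadditive hm.sqrtSubadditive
      (hms.trans hsw) le_rfl (fun n => (infConv_smul_mono hW hM le_rfl hms n).trans (hsn n))
      (fun n => (infConv_smul_mono hW hM le_rfl hmt n).trans (htn n))),
    congrFun (eq_dSup_of_isGreatest hmeet ht.sqrtSubadditive hs.sqrtSubadditive hmt hms
      (fun n => (infConv_smul_mono hT hS htw le_rfl n).trans (hsn n))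
      (infConv_smul_le_left hT hS (FQ_zero s))),
    congrFun (eq_dSup_of_isGreatest hmeet hs.sqrtSubadditive ht.sqrtSubadditive hms hmt
      (infConv_smul_le_left hS hT (FQ_zero t))
      (fun n => (infConv_smul_mono hS hT hsw le_rfl n).trans (htn n)))⟩
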